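/- arXiv:2004.07652 — 3 statements merged into one kernel-verified Lean document; each statement's English description precedes it below -/
import Mathlib

section
/- For any non-negative integer n, the sum over k from 0 to n of (-1)^k * C(n,k) * C(n+k,k) * H_k^2 equals 2*(-1)^n * (2*H_n^2 + sum_{k=1}^n (-1)^k/k^2), where H_k denotes the k-th harmonic number. -/
/-!
Write `T f m = ∑ⱼ (-1)ʲ C(m,j) f j` for the binomial transform, an involution, and
`Lₙ f = ∑ₖ (-1)ᵏ C(n,k) C(n+k,k) f k` for the functional given by the coefficients of the
Legendre polynomial `Pₙ(1 - 2x)`. The identity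
`∑ₖ (-1)ᵏ C(n,k) C(n+k,k) C(k,j) = (-1)ⁿ C(n,j) C(n+j,j)` gives `Lₙ (T f) = (-1)ⁿ Lₙ f`,
the parity `Pₙ(-x) = (-1)ⁿ Pₙ(x)`. Pascal's rule `T f (m+1) = -T (Δf) m` yields
`T (H²) m = Hₘ/m - 2/m²` (reading `1/0` as `0`), so the sum is `(-1)ⁿ (Lₙ (Hₘ/m) - 2 Lₙ (1/m²))`.
These, like `Lₙ (1/m) = -2 Hₙ` and `Lₙ H = 2 (-1)ⁿ Hₙ`, follow by induction on `n` from
`(n+1-m) C(n+1,m) C(n+1+m,m) = (n+1+m) C(n,m) C(n+m,m)`, which gives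
`(n+1) (Lₙ₊₁ f - Lₙ f) = Lₙ₊₁ (m f) + Lₙ (m f)`.
-/

/-- The `n`-th harmonic number `H_n = ∑_{j=1}^n 1/j`. -/
def H (n : ℕ) : ℚ := ∑ j ∈ Finset.range n, 1 / (j + 1 : ℚ)

open Finset

section CommRing

variable {R : Type*} [CommRing R]

def binomialTransform (f : ℕ → R) (m : ℕ) : R :=
  ∑ j ∈ range (m + 1), (-1) ^ j * (m.choose j : R) * f j

lemma binomialTransform_sub (f g : ℕ → R) (m : ℕ) :
    binomialTransform (fun j => f j - g j) m = binomialTransform f m - binomialTransform g m := by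
  simp only [binomialTransform, mul_sub, sum_sub_distrib]

lemma binomialTransform_const_mul (c : R) (f : ℕ → R) (m : ℕ) :
    binomialTransform (fun j => c * f j) m = c * binomialTransform f m := by
  simp only [binomialTransform, mul_sum]
  exact sum_congr rfl fun j _ => by ring

lemma binomialTransform_succ (f : ℕ → R) (m : ℕ) :
    binomialTransform f (m + 1)
      = binomialTransform f m - binomialTransform (fun j => f (j + 1)) m := by
  have pascal : ∀ j, ((m + 1).choose (j + 1) : R) = m.choose j + m.choose (j + 1) := fun j => by
    rw [Nat.choose_succ_succ', Nat.cast_add]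
  have top : ∑ j ∈ range (m + 1), (-1) ^ (j + 1) * (m.choose (j + 1) : R) * f (j + 1) + f 0
      = binomialTransform f m := by
    rw [binomialTransform, sum_range_succ _ m, sum_range_succ' _ m]
    simp
  have shifted : ∑ j ∈ range (m + 1), (-1) ^ (j + 1) * (m.choose j : R) * f (j + 1)
      = -binomialTransform (fun j => f (j + 1)) m := by
    rw [binomialTransform, ← sum_neg_distrib]
    exact sum_congr rfl fun j _ => by ring
  rw [binomialTransform, sum_range_succ']
  simp only [pascal, mul_add, add_mul, sum_add_distrib]
  rw [shifted, ← top]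
  simp only [pow_zero, Nat.choose_zero_right, Nat.cast_one, mul_one, one_mul]
  ring

lemma binomialTransform_succ_eq_neg (f : ℕ → R) (m : ℕ) :
    binomialTransform f (m + 1) = -binomialTransform (fun j => f (j + 1) - f j) m := by
  rw [binomialTransform_succ, binomialTransform_sub]
  ring

theorem binomialTransform_involutive :
    Function.Involutive (binomialTransform : (ℕ → R) → ℕ → R) := by
  intro f
  funext m
  induction m generalizing f with
  | zero => simp [binomialTransform]
  | succ m ih =>
    have hshift : (fun j => binomialTransform f (j + 1))
        = fun j => binomialTransform f j - binomialTransform (fun j => f (j + 1)) j :=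
      funext fun j => binomialTransform_succ f j
    rw [binomialTransform_succ, hshift, binomialTransform_sub, ih, ih]
    ring

lemma binomialTransform_eq_sum_range {m N : ℕ} (h : m ≤ N) (f : ℕ → R) :
    binomialTransform f m = ∑ j ∈ range (N + 1), (-1) ^ j * (m.choose j : R) * f j := by
  refine sum_subset (range_subset_range.2 (by omega)) fun j _ hj => ?_
  rw [Nat.choose_eq_zero_of_lt (by simpa using hj), Nat.cast_zero, mul_zero, zero_mul]

lemma binomialTransform_one_succ (m : ℕ) : binomialTransform (fun _ => (1 : R)) (m + 1) = 0 := by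
  rw [binomialTransform_succ_eq_neg]
  simp [binomialTransform]

lemma binomialTransform_choose_add (a j N : ℕ) :
    binomialTransform (fun i => ((a + i).choose (j + N) : R)) N = (-1) ^ N * a.choose j := by
  induction N with
  | zero => simp [binomialTransform]
  | succ N ih =>
    have hdiff : (fun i => ((a + (i + 1)).choose (j + (N + 1)) : R) - (a + i).choose (j + (N + 1)))
        = fun i => ((a + i).choose (j + N) : R) := funext fun i => by
      rw [← add_assoc a, ← add_assoc j, Nat.choose_succ_succ', Nat.cast_add]; ring
    rw [binomialTransform_succ_eq_neg, hdiff, ih, pow_succ]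
    ring

def legendreSum (n : ℕ) (f : ℕ → R) : R :=
  ∑ k ∈ range (n + 1), (-1) ^ k * (n.choose k : R) * ((n + k).choose k : R) * f k

lemma legendreSum_sub (n : ℕ) (f g : ℕ → R) :
    legendreSum n (fun k => f k - g k) = legendreSum n f - legendreSum n g := by
  simp only [legendreSum, mul_sub, sum_sub_distrib]

lemma legendreSum_const_mul (n : ℕ) (c : R) (f : ℕ → R) :
    legendreSum n (fun k => c * f k) = c * legendreSum n f := by
  simp only [legendreSum, mul_sum]
  exact sum_congr rfl fun k _ => by ring

lemma legendreSum_neg (n : ℕ) (f : ℕ → R) :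
    legendreSum n (fun k => -f k) = -legendreSum n f := by
  simp only [legendreSum, mul_neg, sum_neg_distrib]

theorem legendreSum_choose (n M : ℕ) :
    legendreSum n (fun k => (k.choose M : R)) = (-1) ^ n * n.choose M * (n + M).choose M := by
  rcases lt_or_ge n M with hlt | hle
  · rw [Nat.choose_eq_zero_of_lt hlt, Nat.cast_zero, mul_zero, zero_mul]
    refine sum_eq_zero fun k hk => ?_
    have hkM : k < M := by rw [mem_range] at hk; omega
    simp [Nat.choose_eq_zero_of_lt hkM]
  obtain ⟨N, rfl⟩ := Nat.exists_eq_add_of_le hle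
  have below : ∀ k ∈ range M,
      (-1) ^ k * ((M + N).choose k : R) * ((M + N + k).choose k : R) * (k.choose M : R) = 0 :=
    fun k hk => by rw [Nat.choose_eq_zero_of_lt (mem_range.1 hk), Nat.cast_zero, mul_zero]
  have above : ∀ i, (-1) ^ (M + i) * ((M + N).choose (M + i) : R)
        * ((M + N + (M + i)).choose (M + i) : R) * ((M + i).choose M : R)
      = (-1) ^ M * (M + N).choose M
          * ((-1) ^ i * (N.choose i : R) * ((M + N + M + i).choose (M + N) : R)) := fun i => by
    have hmul := Nat.choose_mul (n := M + N) (k := M + i) (s := M) (by omega)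
    rw [Nat.add_sub_cancel_left, Nat.add_sub_cancel_left] at hmul
    rw [Nat.choose_symm_of_eq_add (show M + N + (M + i) = (M + i) + (M + N) by omega),
      show M + N + (M + i) = M + N + M + i by omega, pow_add]
    have hcast := congrArg (Nat.cast : ℕ → R) hmul
    push_cast at hcast
    linear_combination ((-1) ^ M * (-1) ^ i * ((M + N + M + i).choose (M + N) : R)) * hcast
  rw [legendreSum, show M + N + 1 = M + (N + 1) by omega, sum_range_add, sum_eq_zero below,
    zero_add]
  simp only [above, ← mul_sum]
  rw [← binomialTransform, binomialTransform_choose_add, pow_add]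
  ring

theorem legendreSum_binomialTransform (n : ℕ) (f : ℕ → R) :
    legendreSum n (binomialTransform f) = (-1) ^ n * legendreSum n f := by
  calc legendreSum n (binomialTransform f)
      = ∑ k ∈ range (n + 1), ∑ j ∈ range (n + 1), (-1) ^ k * (n.choose k : R)
          * ((n + k).choose k : R) * ((-1) ^ j * (k.choose j : R) * f j) := by
        refine sum_congr rfl fun k hk => ?_
        rw [binomialTransform_eq_sum_range (mem_range_succ_iff.1 hk), mul_sum]
    _ = ∑ j ∈ range (n + 1), (-1) ^ j * f j * legendreSum n (fun k => (k.choose j : R)) := by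
        rw [sum_comm]
        simp only [legendreSum, mul_sum]
        exact sum_congr rfl fun j _ => sum_congr rfl fun k _ => by ring
    _ = (-1) ^ n * legendreSum n f := by
        simp only [legendreSum_choose]
        rw [legendreSum, mul_sum]
        exact sum_congr rfl fun j _ => by ring

lemma legendreSum_one (n : ℕ) : legendreSum n (fun _ => (1 : R)) = (-1) ^ n := by
  simpa using legendreSum_choose (R := R) n 0

lemma succ_mul_choose_mul_choose_add (n M : ℕ) :
    (n + 1) * ((n + 1).choose M * (n + 1 + M).choose M)
      = M * ((n + 1).choose M * (n + 1 + M).choose M)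
        + (n + 1 + M) * (n.choose M * (n + M).choose M) := by
  rcases lt_or_ge (n + 1) M with hlt | hle
  · simp [Nat.choose_eq_zero_of_lt hlt, Nat.choose_eq_zero_of_lt (Nat.lt_of_succ_lt hlt)]
  have h1 := Nat.choose_mul_succ_eq n M
  have h2 := Nat.choose_mul_succ_eq (n + M) M
  rw [show n + M + 1 - M = n + 1 by omega, show n + M + 1 = n + 1 + M by omega] at h2
  apply Nat.eq_of_mul_eq_mul_left (Nat.succ_pos n)
  zify [hle] at h1 h2 ⊢
  linear_combination (-((n : ℤ) + 1 + M) * ((n + M).choose M : ℤ)) * h1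
    - ((n + 1).choose M : ℤ) * ((n : ℤ) + 1 - M) * h2

theorem legendreSum_succ_sub (n : ℕ) (g : ℕ → R) :
    (n + 1) * (legendreSum (n + 1) g - legendreSum n g)
      = legendreSum (n + 1) (fun M => M * g M) + legendreSum n (fun M => M * g M) := by
  have extend : ∀ f : ℕ → R, legendreSum n f
      = ∑ k ∈ range (n + 2), (-1) ^ k * (n.choose k : R) * ((n + k).choose k : R) * f k := by
    intro f
    rw [legendreSum, sum_range_succ _ (n + 1), Nat.choose_succ_self]
    simp
  rw [extend, extend, legendreSum, legendreSum, mul_sub, mul_sum, mul_sum, ← sum_sub_distrib,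
    ← sum_add_distrib]
  refine sum_congr rfl fun M _ => ?_
  have h := congrArg (Nat.cast : ℕ → R) (succ_mul_choose_mul_choose_add n M)
  push_cast at h
  linear_combination (-1) ^ M * g M * h

end CommRing

lemma H_succ (n : ℕ) : H (n + 1) = H n + 1 / ((n : ℚ) + 1) := by
  simp [H, sum_range_succ]

lemma binomialTransform_div_succ (F : ℕ → ℚ) (m : ℕ) :
    binomialTransform (fun j => F (j + 1) / ((j : ℚ) + 1)) m
      = (F 0 - binomialTransform F (m + 1)) / ((m : ℚ) + 1) := by
  have hF : binomialTransform F (m + 1)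
      = ∑ j ∈ range (m + 1), (-1) ^ (j + 1) * ((m + 1).choose (j + 1) : ℚ) * F (j + 1) + F 0 := by
    rw [binomialTransform, sum_range_succ']
    simp
  rw [eq_div_iff (by positivity), hF, binomialTransform, sum_mul, sub_add_cancel_right,
    ← sum_neg_distrib]
  refine sum_congr rfl fun j _ => ?_
  have absorb :
      (m.choose j : ℚ) * ((m : ℚ) + 1) = ((m + 1).choose (j + 1) : ℚ) * ((j : ℚ) + 1) := by
    exact_mod_cast (mul_comm _ _).trans (Nat.add_one_mul_choose_eq m j)
  field_simp
  linear_combination (-1) ^ j * F (j + 1) * absorb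

lemma binomialTransform_inv_succ (m : ℕ) :
    binomialTransform (fun j => 1 / ((j : ℚ) + 1)) m = 1 / ((m : ℚ) + 1) := by
  rw [binomialTransform_div_succ (fun _ => 1), binomialTransform_one_succ, sub_zero]

lemma binomialTransform_H (m : ℕ) : binomialTransform H m = -(m : ℚ)⁻¹ := by
  cases m with
  | zero => simp [binomialTransform, H]
  | succ m =>
    have hdiff : (fun j : ℕ => H (j + 1) - H j) = fun j : ℕ => 1 / ((j : ℚ) + 1) :=
      funext fun j => by rw [H_succ]; ring
    rw [binomialTransform_succ_eq_neg, hdiff, binomialTransform_inv_succ]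
    push_cast
    ring

lemma binomialTransform_H_succ_div (m : ℕ) :
    binomialTransform (fun j => H (j + 1) / ((j : ℚ) + 1)) m = 1 / ((m : ℚ) + 1) ^ 2 := by
  rw [binomialTransform_div_succ H, binomialTransform_H]
  simp only [H, range_zero, sum_empty]
  push_cast
  field_simp
  ring

lemma binomialTransform_inv_sq_succ (m : ℕ) :
    binomialTransform (fun j => 1 / ((j : ℚ) + 1) ^ 2) m = H (m + 1) / ((m : ℚ) + 1) := by
  have h : binomialTransform (fun j => H (j + 1) / ((j : ℚ) + 1))
      = fun j : ℕ => 1 / ((j : ℚ) + 1) ^ 2 :=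
    funext fun m => binomialTransform_H_succ_div m
  rw [← h, binomialTransform_involutive]

lemma binomialTransform_H_sq :
    binomialTransform (fun k => H k ^ 2) = fun m => H m / m - 2 * ((m : ℚ) ^ 2)⁻¹ := by
  funext m
  cases m with
  | zero => simp [binomialTransform, H]
  | succ m =>
    have hdiff : (fun j : ℕ => H (j + 1) ^ 2 - H j ^ 2)
        = fun j : ℕ => 2 * (H (j + 1) / ((j : ℚ) + 1)) - 1 / ((j : ℚ) + 1) ^ 2 :=
      funext fun j => by rw [H_succ]; field_simp; ring
    rw [binomialTransform_succ_eq_neg, hdiff, binomialTransform_sub, binomialTransform_const_mul,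
      binomialTransform_H_succ_div, binomialTransform_inv_sq_succ]
    push_cast
    ring

lemma legendreSum_mul_inv (n : ℕ) :
    legendreSum n (fun M => (M : ℚ) * (M : ℚ)⁻¹) = (-1) ^ n - 1 := by
  rw [← legendreSum_one, legendreSum, legendreSum, sum_range_succ', sum_range_succ']
  simp [Nat.cast_add_one_ne_zero]

lemma legendreSum_inv (n : ℕ) : legendreSum n (fun M => (M : ℚ)⁻¹) = -2 * H n := by
  induction n with
  | zero => simp [legendreSum, H]
  | succ n ih =>
    have step := legendreSum_succ_sub n (fun M => (M : ℚ)⁻¹)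
    beta_reduce at step
    rw [legendreSum_mul_inv, legendreSum_mul_inv, ih, pow_succ] at step
    rw [H_succ]
    generalize legendreSum (n + 1) (fun M => (M : ℚ)⁻¹) = x at step ⊢
    field_simp at step ⊢
    linear_combination step

lemma legendreSum_H (n : ℕ) : legendreSum n H = 2 * (-1) ^ n * H n := by
  have h := legendreSum_binomialTransform n H
  rw [show binomialTransform H = fun m : ℕ => -(m : ℚ)⁻¹ from funext binomialTransform_H,
    legendreSum_neg, legendreSum_inv] at h
  have hsq : ((-1 : ℚ) ^ n) * (-1) ^ n = 1 := by rw [← mul_pow]; simp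
  linear_combination (-(-1) ^ n) * h - legendreSum n H * hsq

lemma legendreSum_inv_sq (n : ℕ) : legendreSum n (fun M => ((M : ℚ) ^ 2)⁻¹) = -2 * H n ^ 2 := by
  induction n with
  | zero => simp [legendreSum, H]
  | succ n ih =>
    have step := legendreSum_succ_sub n (fun M : ℕ => ((M : ℚ) ^ 2)⁻¹)
    have hmul : (fun M : ℕ => (M : ℚ) * ((M : ℚ) ^ 2)⁻¹) = fun M : ℕ => (M : ℚ)⁻¹ := by
      funext M
      rcases eq_or_ne (M : ℚ) 0 with h | h
      · simp [h]
      · field_simp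
    beta_reduce at step
    rw [hmul, legendreSum_inv, legendreSum_inv, ih] at step
    rw [H_succ] at step ⊢
    generalize legendreSum (n + 1) (fun M => ((M : ℚ) ^ 2)⁻¹) = x at step ⊢
    field_simp at step ⊢
    linear_combination step

lemma legendreSum_H_div (n : ℕ) :
    legendreSum n (fun M => H M / M) = 2 * ∑ k ∈ range n, (-1) ^ (k + 1) / ((k : ℚ) + 1) ^ 2 := by
  induction n with
  | zero => simp [legendreSum, H]
  | succ n ih =>
    have step := legendreSum_succ_sub n (fun M => H M / M)
    have hmul : (fun M : ℕ => (M : ℚ) * (H M / M)) = H := by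
      funext M
      rcases eq_or_ne (M : ℚ) 0 with h | h
      · simp [show M = 0 by exact_mod_cast h, H]
      · field_simp
    beta_reduce at step
    rw [hmul, legendreSum_H, legendreSum_H, ih] at step
    rw [H_succ] at step
    rw [sum_range_succ]
    generalize legendreSum (n + 1) (fun M => H M / M) = x at step ⊢
    field_simp at step ⊢
    linear_combination step

theorem stmt0 (n : ℕ) :
    ∑ k ∈ Finset.range (n + 1),
      (-1 : ℚ) ^ k * (n.choose k) * ((n + k).choose k) * (H k) ^ 2 =
    2 * (-1 : ℚ) ^ n *
      (2 * (H n) ^ 2 + ∑ k ∈ Finset.range n, (-1 : ℚ) ^ (k + 1) / (k + 1 : ℚ) ^ 2) := by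
  have h := legendreSum_binomialTransform n (binomialTransform fun k => H k ^ 2)
  rw [binomialTransform_involutive, binomialTransform_H_sq, legendreSum_sub,
    legendreSum_const_mul, legendreSum_H_div, legendreSum_inv_sq] at h
  change legendreSum n (fun k => H k ^ 2) = _
  rw [h]
  ring
end

section
/- For any prime p ≥ 5 and any integer k with 0 ≤ k ≤ (p-1)/2, the congruence (-1)^k * C((p-1)/2, k) * C((p-1)/2 + k, k) ≡ C(2k,k)^2 / 16^k (mod p) holds, i.e., 16^k * (-1)^k * C((p-1)/2, k) * C((p-1)/2+k, k) ≡ C(2k,k)^2 (mod p). -/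
/-!
Write `m = (p - 1) / 2`, so that `2 m + 1 ≡ 0 (mod p)`. Passing from `k` to `k + 1`, the left-hand
side gets multiplied by `-16 (m - k)(m + k + 1) / (k + 1)² = 4 ((2k + 1)² - (2m + 1)²) / (k + 1)²`,
and `C(2k, k)²` by `4 (2k + 1)² / (k + 1)²`. Modulo `p` the two factors agree, and `(k + 1)²` is
invertible for `k < p`, so the congruence follows by induction on `k`.
-/

open Nat

section Recurrences

variable {R : Type*} [CommRing R]

theorem sq_succ_mul_choose_mul_add_choose_succ {m k : ℕ} (hk : k ≤ m) :
    ((k : R) + 1) ^ 2 *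
        (16 ^ (k + 1) * (-1) ^ (k + 1) * m.choose (k + 1) * (m + (k + 1)).choose (k + 1)) =
      4 * ((2 * k + 1) ^ 2 - (2 * m + 1) ^ 2) *
        (16 ^ k * (-1) ^ k * m.choose k * (m + k).choose k) := by
  have hm : (m.choose (k + 1) : R) * (k + 1) = m.choose k * (m - k) := by
    have h := congrArg (Nat.cast : ℕ → R) (Nat.choose_succ_right_eq m k)
    push_cast [Nat.cast_sub hk] at h
    exact h
  have hmk : ((m + (k + 1)).choose (k + 1) : R) * (k + 1) = (m + k + 1) * (m + k).choose k := by
    rw [← add_assoc]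
    exact_mod_cast congrArg (Nat.cast : ℕ → R) (Nat.add_one_mul_choose_eq (m + k) k).symm
  linear_combination
    (16 ^ (k + 1) * (-1) ^ (k + 1) * ((k : R) + 1) * (m + (k + 1)).choose (k + 1)) * hm +
      (16 ^ (k + 1) * (-1) ^ (k + 1) * m.choose k * (m - k)) * hmk

theorem sq_succ_mul_centralBinom_succ_sq (k : ℕ) :
    ((k : R) + 1) ^ 2 * (centralBinom (k + 1) : R) ^ 2 =
      4 * (2 * k + 1) ^ 2 * (centralBinom k : R) ^ 2 := by
  have h : ((k : R) + 1) * centralBinom (k + 1) = 2 * (2 * k + 1) * centralBinom k := by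
    exact_mod_cast congrArg (Nat.cast : ℕ → R) (Nat.succ_mul_centralBinom_succ k)
  linear_combination (((k : R) + 1) * centralBinom (k + 1) + 2 * (2 * k + 1) * centralBinom k) * h

end Recurrences

theorem sixteen_pow_mul_choose_mul_add_choose_eq_centralBinom_sq {R : Type*} [CommRing R]
    [IsDomain R] {m k : ℕ} (hm : 2 * (m : R) + 1 = 0) (hkm : k ≤ m) (hk : (k ! : R) ≠ 0) :
    (16 : R) ^ k * (-1) ^ k * m.choose k * (m + k).choose k = (centralBinom k : R) ^ 2 := by
  induction k with
  | zero => simp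
  | succ k ih =>
    rw [Nat.factorial_succ, Nat.cast_mul, mul_ne_zero_iff] at hk
    have hk1 : ((k : R) + 1) ^ 2 ≠ 0 := pow_ne_zero 2 (by exact_mod_cast hk.1)
    refine mul_left_cancel₀ hk1 ?_
    rw [sq_succ_mul_choose_mul_add_choose_succ (by omega), ih (by omega) hk.2, hm,
      sq_succ_mul_centralBinom_succ_sq]
    ring

theorem stmt2 (p : ℕ) (hp : p.Prime) (hp5 : 5 ≤ p) (k : ℕ) (hk : k ≤ (p - 1) / 2) :
    (16 ^ k * (-1) ^ k * (((p - 1) / 2).choose k) * (((p - 1) / 2 + k).choose k) : ℤ) ≡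
      (((2 * k).choose k) ^ 2 : ℤ) [ZMOD p] := by
  have : Fact p.Prime := ⟨hp⟩
  have hm : 2 * (((p - 1) / 2 : ℕ) : ZMod p) + 1 = 0 := by
    obtain ⟨t, rfl⟩ := hp.odd_of_ne_two (by omega)
    rw [show (2 * t + 1 - 1) / 2 = t by omega]
    exact_mod_cast ZMod.natCast_self (2 * t + 1)
  have hfact : (k ! : ZMod p) ≠ 0 := by
    rw [Ne, ZMod.natCast_eq_zero_iff, hp.dvd_factorial]
    omega
  rw [← ZMod.intCast_eq_intCast_iff, ← centralBinom_eq_two_mul_choose]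
  push_cast
  exact sixteen_pow_mul_choose_mul_add_choose_eq_centralBinom_sq hm hk hfact
end

section
/- For any prime p ≥ 5, the harmonic number H_{(p-1)/2} = sum_{k=1}^{(p-1)/2} 1/k satisfies H_{(p-1)/2} ≡ -2*q_p(2) (mod p), where q_p(2) = (2^{p-1}-1)/p is the Fermat quotient. -/
/-! Expanding `2 ^ p = (1 + 1) ^ p` gives `2 q_p(2) = ∑_{k=1}^{p-1} C(p, k) / p`, and
`C(p, k) / p = C(p - 1, k - 1) / k ≡ (-1) ^ (k - 1) / k (mod p)`. The alternating sum
`∑_{k=1}^{p-1} (-1) ^ (k - 1) / k` equals `H_{p-1} - H_{(p-1)/2}`, and `H_{p-1} ≡ 0` because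
`k ↦ p - k` negates its terms. -/

open Finset

theorem Rat.cast_sum_of_den_ne_zero {ι F : Type*} [Field F] (s : Finset ι) (f : ι → ℚ)
    (hf : ∀ i ∈ s, ((f i).den : F) ≠ 0) : ((∑ i ∈ s, f i : ℚ) : F) = ∑ i ∈ s, (f i : F) := by
  classical
  induction s using Finset.induction_on with
  | empty => simp
  | insert a s has ih =>
    have hs : ((∑ i ∈ s, f i).den : F) ≠ 0 := by
      obtain ⟨c, hc⟩ := Finset.Rat.den_sum_dvd_prod_den s f
      have hprod : ((∏ i ∈ s, (f i).den : ℕ) : F) ≠ 0 := by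
        push_cast
        exact prod_ne_zero_iff.mpr fun i hi => hf i (mem_insert_of_mem hi)
      rw [hc, Nat.cast_mul] at hprod
      exact left_ne_zero_of_mul hprod
    rw [sum_insert has, sum_insert has, Rat.cast_add_of_ne_zero (hf a (mem_insert_self a s)) hs,
      ih fun i hi => hf i (mem_insert_of_mem hi)]

theorem cast_H_eq_sum_inv {F : Type*} [Field F] (n : ℕ) (hn : ∀ j < n, ((j + 1 : ℕ) : F) ≠ 0) :
    ((H n : ℚ) : F) = ∑ j ∈ range n, ((j + 1 : ℕ) : F)⁻¹ := by
  have hterm (j : ℕ) : 1 / (j + 1 : ℚ) = ((j + 1 : ℕ) : ℚ)⁻¹ := by push_cast; rw [one_div]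
  simp only [H, hterm]
  rw [Rat.cast_sum_of_den_ne_zero]
  · simp only [Rat.cast_inv_nat]
  · intro j hj
    rw [Rat.inv_natCast_den_of_pos j.succ_pos]
    exact hn j (mem_range.mp hj)

theorem sum_range_neg_one_pow_mul_inv {F : Type*} [Field F] (h2 : (2 : F) ≠ 0) (n : ℕ) :
    ∑ k ∈ range (2 * n), (-1 : F) ^ k * ((k + 1 : ℕ) : F)⁻¹ =
      ∑ k ∈ range (2 * n), ((k + 1 : ℕ) : F)⁻¹ - ∑ k ∈ range n, ((k + 1 : ℕ) : F)⁻¹ := by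
  induction n with
  | zero => simp
  | succ n ih =>
    have hhalf : ((2 * n + 1 + 1 : ℕ) : F)⁻¹ = 2⁻¹ * ((n + 1 : ℕ) : F)⁻¹ := by
      rw [← mul_inv]; push_cast; ring_nf
    rw [show 2 * (n + 1) = 2 * n + 1 + 1 by ring]
    simp only [sum_range_succ, ih, pow_succ, pow_mul, hhalf]
    field_simp
    ring

theorem ZMod.natCast_ne_zero_of_pos_of_lt {p k : ℕ} (h0 : 0 < k) (hk : k < p) :
    (k : ZMod p) ≠ 0 := by
  rw [Ne, ZMod.natCast_eq_zero_iff]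
  exact fun h => absurd (Nat.le_of_dvd h0 h) (by omega)

theorem sum_range_choose_succ (n : ℕ) :
    ∑ k ∈ range n, ((n + 1).choose (k + 1) : ℤ) = 2 ^ (n + 1) - 2 := by
  have h := Nat.sum_range_choose (n + 1)
  rw [sum_range_succ', sum_range_succ, Nat.choose_self, Nat.choose_zero_right] at h
  have hZ : ((∑ k ∈ range n, (n + 1).choose (k + 1) : ℕ) : ℤ) + 1 + 1 = 2 ^ (n + 1) := by
    exact_mod_cast h
  push_cast at hZ
  linarith

section Prime

variable {p : ℕ} [hp : Fact p.Prime]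

theorem ZMod.two_ne_zero_of_ne_two (hp2 : p ≠ 2) : (2 : ZMod p) ≠ 0 := by
  exact_mod_cast ZMod.natCast_ne_zero_of_pos_of_lt two_pos (hp.out.two_le.lt_of_ne' hp2)

theorem ZMod.sum_range_inv_eq_zero (hp2 : p ≠ 2) :
    ∑ k ∈ range (p - 1), ((k + 1 : ℕ) : ZMod p)⁻¹ = 0 := by
  -- `k ↦ p - 2 - k` reverses the range and sends `k + 1` to `-(k + 1)` modulo `p`
  have hneg : ∑ k ∈ range (p - 1), ((k + 1 : ℕ) : ZMod p)⁻¹ =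
      -∑ k ∈ range (p - 1), ((k + 1 : ℕ) : ZMod p)⁻¹ := by
    conv_lhs => rw [← sum_range_reflect]
    rw [← sum_neg_distrib]
    refine sum_congr rfl fun k hk => ?_
    have hsum : ((p - 1 - 1 - k + 1 : ℕ) : ZMod p) + ((k + 1 : ℕ) : ZMod p) = 0 := by
      have hk := mem_range.mp hk
      rw [← Nat.cast_add, show p - 1 - 1 - k + 1 + (k + 1) = p by omega, ZMod.natCast_self]
    rw [eq_neg_iff_add_eq_zero.mpr hsum, inv_neg]
  rw [eq_neg_iff_add_eq_zero, ← two_mul] at hneg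
  exact (mul_eq_zero.mp hneg).resolve_left (ZMod.two_ne_zero_of_ne_two hp2)

theorem ZMod.natCast_choose_sub_one {k : ℕ} (hk : k < p) :
    (((p - 1).choose k : ℕ) : ZMod p) = (-1) ^ k := by
  induction k with
  | zero => simp
  | succ k ih =>
    have hpascal : (p - 1).choose k + (p - 1).choose (k + 1) = p.choose (k + 1) := by
      rw [← Nat.choose_succ_succ', Nat.sub_add_cancel hp.out.one_le]
    have hvanish : ((p.choose (k + 1) : ℕ) : ZMod p) = 0 :=
      (ZMod.natCast_eq_zero_iff _ _).mpr (hp.out.dvd_choose_self k.succ_ne_zero hk)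
    rw [← hpascal, Nat.cast_add, ih (by omega)] at hvanish
    rw [pow_succ]
    linear_combination hvanish

theorem ZMod.intCast_choose_div_self {k : ℕ} (hk : k < p - 1) :
    (((p.choose (k + 1) : ℤ) / p : ℤ) : ZMod p) = (-1) ^ k * ((k + 1 : ℕ) : ZMod p)⁻¹ := by
  set c := (p.choose (k + 1) : ℤ) / p
  have hc : p * c = p.choose (k + 1) := Int.mul_ediv_cancel' <|
    Int.natCast_dvd_natCast.mpr (hp.out.dvd_choose_self k.succ_ne_zero (by omega))
  have habsorb : p * (p - 1).choose k = p.choose (k + 1) * (k + 1) := by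
    simpa only [Nat.sub_add_cancel hp.out.one_le] using Nat.add_one_mul_choose_eq (p - 1) k
  have hmul : c * (k + 1 : ℕ) = (p - 1).choose k := by
    refine mul_left_cancel₀ (Int.natCast_ne_zero.mpr hp.out.ne_zero) ?_
    rw [← mul_assoc, hc]
    exact_mod_cast habsorb.symm
  have hmulZ := congrArg (fun m : ℤ => (m : ZMod p)) hmul
  push_cast [ZMod.natCast_choose_sub_one (p := p) (k := k) (by omega)] at hmulZ
  rw [eq_mul_inv_iff_mul_eq₀ (ZMod.natCast_ne_zero_of_pos_of_lt k.succ_pos (by omega))]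
  exact_mod_cast hmulZ

theorem sum_choose_succ_div_self_eq_two_mul (hp2 : p ≠ 2) :
    ∑ k ∈ range (p - 1), (p.choose (k + 1) : ℤ) / p = 2 * ((2 ^ (p - 1) - 1) / p) := by
  have hfermat : (p : ℤ) ∣ 2 ^ (p - 1) - 1 := by
    rw [← ZMod.intCast_zmod_eq_zero_iff_dvd]
    push_cast
    rw [ZMod.pow_card_sub_one_eq_one (ZMod.two_ne_zero_of_ne_two hp2), sub_self]
  have hchoose := sum_range_choose_succ (p - 1)
  rw [Nat.sub_add_cancel hp.out.one_le] at hchoose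
  rw [← Int.sum_div fun k hk => Int.natCast_dvd_natCast.mpr
      (hp.out.dvd_choose_self k.succ_ne_zero (by have := mem_range.mp hk; omega)),
    hchoose, ← Int.mul_ediv_assoc 2 hfermat]
  congr 1
  rw [mul_sub, ← pow_succ', Nat.sub_add_cancel hp.out.one_le, mul_one]

end Prime

theorem stmt3 (p : ℕ) [hp : Fact p.Prime] (hp5 : 5 ≤ p) :
    ((H ((p - 1) / 2) : ℚ) : ZMod p) =
      ((-2 * ((2 ^ (p - 1) - 1) / (p : ℤ)) : ℤ) : ZMod p) := by
  have hp2 : p ≠ 2 := by omega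
  have hhalf : p - 1 = 2 * ((p - 1) / 2) := by
    have := Nat.odd_iff.mp (hp.out.odd_of_ne_two hp2)
    omega
  have halt := sum_range_neg_one_pow_mul_inv (ZMod.two_ne_zero_of_ne_two hp2) ((p - 1) / 2)
  rw [← hhalf, ZMod.sum_range_inv_eq_zero hp2, zero_sub,
    sum_congr rfl fun k hk => (ZMod.intCast_choose_div_self (mem_range.mp hk)).symm,
    ← Int.cast_sum, sum_choose_succ_div_self_eq_two_mul hp2] at halt
  rw [cast_H_eq_sum_inv _ fun j hj =>
    ZMod.natCast_ne_zero_of_pos_of_lt j.succ_pos (by omega), ← neg_eq_iff_eq_neg.mpr halt]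
  push_cast
  ring
end
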